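/- Production is the converse of consumption: for every assertion a, if (s, h) →[a]_c (s', 0) (consumption consuming exactly h, leaving the empty heap) then for every heap h'' we have (s, h'') →[a]_p (s', h'' ⊎ h). -/
import Mathlib


/- ## Syntax of the programming language and of assertions; semiconcrete states -/

/-- Integer expressions. -/
inductive IExp (V : Type) where
  | lit (z : ℤ)
  | var (x : V)
  | add (e₁ e₂ : IExp V)
  | sub (e₁ e₂ : IExp V)

/-- Boolean expressions. -/
inductive BExp (V : Type) where
  | eq (e₁ e₂ : IExp V)
  | lt (e₁ e₂ : IExp V)
  | not (b : BExp V)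

/-- Evaluation of an integer expression under a store. -/
def IExp.eval {V : Type} (s : V → ℤ) : IExp V → ℤ
  | .lit z => z
  | .var x => s x
  | .add e₁ e₂ => e₁.eval s + e₂.eval s
  | .sub e₁ e₂ => e₁.eval s - e₂.eval s

/-- Evaluation of a boolean expression under a store. -/
def BExp.eval {V : Type} (s : V → ℤ) : BExp V → Bool
  | .eq e₁ e₂ => decide (e₁.eval s = e₂.eval s)
  | .lt e₁ e₂ => decide (e₁.eval s < e₂.eval s)
  | .not b => !(b.eval s)

/-- Predicate names: the built-in points-to and malloc-block predicates, plus
user-defined predicates drawn from `P`. -/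
inductive PredName (P : Type) where
  | pts
  | mb
  | user (q : P)
deriving DecidableEq

/-- A chunk `p(v̄)`: a predicate name together with its integer arguments. -/
abbrev Chunk (P : Type) := PredName P × List ℤ

/-- A heap: a multiset of chunks. -/
abbrev Heap (P : Type) := Multiset (Chunk P)

/-- A (semiconcrete) state: a store paired with a heap. -/
abbrev SCState (V P : Type) := (V → ℤ) × Heap P

/-- Function update `f[x := v]`. -/
def updF {V α : Type} [DecidableEq V] (s : V → α) (x : V) (v : α) : V → α :=
  fun y => if y = x then v else s y

/-- Function update by lists, `f[x̄ := v̄]`. -/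
def updsF {V α : Type} [DecidableEq V] : (V → α) → List V → List α → (V → α)
  | s, [], _ => s
  | s, _ :: _, [] => s
  | s, x :: xs, v :: vs => updsF (updF s x v) xs vs

/-- Assertions: boolean expressions, predicate assertions with variable patterns,
separating conjunction, and conditional assertions. -/
inductive Assn (V P : Type) where
  | bexp (b : BExp V)
  | pred (p : PredName P) (es : List (IExp V)) (xs : List V)
  | star (a₁ a₂ : Assn V P)
  | ite (b : BExp V) (a₁ a₂ : Assn V P)

/- ## Consumption and production arrows -/

/-- The consumption arrow `(s, h) →[a]_c (s', h')`. -/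
inductive ConsArrow {V P : Type} [DecidableEq V] :
    SCState V P → Assn V P → SCState V P → Prop where
  | bexp {s : V → ℤ} {h : Heap P} {b : BExp V} :
      b.eval s = true → ConsArrow (s, h) (.bexp b) (s, h)
  | pred {s : V → ℤ} {h h' : Heap P} {p : PredName P} {es : List (IExp V)}
      {xs : List V} {vs : List ℤ} :
      vs.length = xs.length →
      h = (p, es.map (IExp.eval s) ++ vs) ::ₘ h' →
      ConsArrow (s, h) (.pred p es xs) (updsF s xs vs, h')
  | star {σ σ' σ'' : SCState V P} {a₁ a₂ : Assn V P} :
      ConsArrow σ a₁ σ' → ConsArrow σ' a₂ σ'' → ConsArrow σ (.star a₁ a₂) σ''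
  | iteTrue {s : V → ℤ} {h : Heap P} {b : BExp V} {a₁ a₂ : Assn V P} {σ' : SCState V P} :
      b.eval s = true → ConsArrow (s, h) a₁ σ' → ConsArrow (s, h) (.ite b a₁ a₂) σ'
  | iteFalse {s : V → ℤ} {h : Heap P} {b : BExp V} {a₁ a₂ : Assn V P} {σ' : SCState V P} :
      b.eval s = false → ConsArrow (s, h) a₂ σ' → ConsArrow (s, h) (.ite b a₁ a₂) σ'

/-- The production arrow `(s, h) →[a]_p (s', h')`. -/
inductive ProdArrow {V P : Type} [DecidableEq V] :
    SCState V P → Assn V P → SCState V P → Prop where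
  | bexp {s : V → ℤ} {h : Heap P} {b : BExp V} :
      b.eval s = true → ProdArrow (s, h) (.bexp b) (s, h)
  | pred {s : V → ℤ} {h h' : Heap P} {p : PredName P} {es : List (IExp V)}
      {xs : List V} {vs : List ℤ} :
      vs.length = xs.length →
      h' = (p, es.map (IExp.eval s) ++ vs) ::ₘ h →
      ProdArrow (s, h) (.pred p es xs) (updsF s xs vs, h')
  | star {σ σ' σ'' : SCState V P} {a₁ a₂ : Assn V P} :
      ProdArrow σ a₁ σ' → ProdArrow σ' a₂ σ'' → ProdArrow σ (.star a₁ a₂) σ''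
  | iteTrue {s : V → ℤ} {h : Heap P} {b : BExp V} {a₁ a₂ : Assn V P} {σ' : SCState V P} :
      b.eval s = true → ProdArrow (s, h) a₁ σ' → ProdArrow (s, h) (.ite b a₁ a₂) σ'
  | iteFalse {s : V → ℤ} {h : Heap P} {b : BExp V} {a₁ a₂ : Assn V P} {σ' : SCState V P} :
      b.eval s = false → ProdArrow (s, h) a₂ σ' → ProdArrow (s, h) (.ite b a₁ a₂) σ'


theorem consArrow_aux {V P : Type} [DecidableEq V]
    {s1 s2 : SCState V P} {a : Assn V P} (hc : ConsArrow s1 a s2) :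
    ∃ k : Heap P, s1.2 = k + s2.2 ∧
      ∀ hh : Heap P, ProdArrow (s1.1, hh) a (s2.1, hh + k) := by
  induction hc with
  | bexp hb => exact ⟨0, by simp, fun hh => by simpa using ProdArrow.bexp hb⟩
  | @pred s h h' p es xs vs hlen hheq =>
      refine ⟨{(p, es.map (IExp.eval s) ++ vs)}, ?_, fun hh => ?_⟩
      · simpa [Multiset.singleton_add] using hheq
      · exact ProdArrow.pred hlen (by
          simp [← Multiset.singleton_add, add_comm])
  | star h1 h2 ih1 ih2 =>
      obtain ⟨k1, e1, p1⟩ := ih1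
      obtain ⟨k2, e2, p2⟩ := ih2
      refine ⟨k1 + k2, by rw [e1, e2, add_assoc], fun hh => ?_⟩
      simpa [add_assoc] using ProdArrow.star (p1 hh) (p2 (hh + k1))
  | iteTrue hb _ ih =>
      obtain ⟨k, e, p⟩ := ih
      exact ⟨k, e, fun hh => ProdArrow.iteTrue hb (p hh)⟩
  | iteFalse hb _ ih =>
      obtain ⟨k, e, p⟩ := ih
      exact ⟨k, e, fun hh => ProdArrow.iteFalse hb (p hh)⟩

/-- production is the converse of consumption. -/
theorem prodArrow_of_consArrow {V P : Type} [DecidableEq V]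
    (a : Assn V P) (s s' : V → ℤ) (h : Heap P)
    (hc : ConsArrow (s, h) a (s', 0)) :
    ∀ h'' : Heap P, ProdArrow (s, h'') a (s', h'' + h) := by
  obtain ⟨k, e, p⟩ := consArrow_aux hc
  simp only at e
  rw [add_zero] at e
  subst e
  exact p
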